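/- Consider the constrained differential inclusion Σ and a closed set K ⊆ ℝⁿ such that Assumptions 1, 2 and 3 hold. Let φ be a solution of Σ starting from x ∈ 𝒫 that leaves K immediately. Then cl(F_φ(x)) ⊆ T_{∂K ∩ C}(x) \ T_{∂K \ int(C)}(x). -/

import Mathlib

open MeasureTheory Filter Topology Set
open scoped RealInnerProductSpace

/-- Euclidean space ℝⁿ. -/
abbrev Euc (n : ℕ) := EuclideanSpace ℝ (Fin n)

variable {E : Type*} [NormedAddCommGroup E] [InnerProductSpace ℝ E]

/-- The contingent (Bouligand) cone to `S` at `x`: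
`v` belongs to it iff there are sequences `tᵢ → 0⁺` and `vᵢ → v` with `x + tᵢ • vᵢ ∈ S`. -/
def contingentCone (S : Set E) (x : E) : Set E :=
  {v | ∃ t : ℕ → ℝ, ∃ w : ℕ → E,
    (∀ i, 0 < t i) ∧ Tendsto t atTop (𝓝 0) ∧ Tendsto w atTop (𝓝 v) ∧
    ∀ i, x + t i • w i ∈ S}

/-- The adjacent cone to `S` at `x`:
`v` belongs to it iff for every sequence `tᵢ → 0⁺` there is `vᵢ → v` with `x + tᵢ • vᵢ ∈ S`. -/
def adjacentCone (S : Set E) (x : E) : Set E :=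
  {v | ∀ t : ℕ → ℝ, (∀ i, 0 < t i) → Tendsto t atTop (𝓝 0) →
    ∃ w : ℕ → E, Tendsto w atTop (𝓝 v) ∧ ∀ i, x + t i • w i ∈ S}

/-- The Dubovitskiy cone to `S` at `x`. -/
def dubovitskiyCone (S : Set E) (x : E) : Set E :=
  {v | ∀ t : ℕ → ℝ, ∀ w : ℕ → E, (∀ i, 0 < t i) → Tendsto t atTop (𝓝 0) →
    Tendsto w atTop (𝓝 v) → ∀ᶠ i in atTop, x + t i • w i ∈ interior S}

/-- Lower semicontinuity of a set-valued map at a point along a filter `l`. -/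
def SVLowerSemicontinuousAt (F : E → Set E) (l : Filter E) (x : E) : Prop :=
  ∀ U : Set E, IsOpen U → (F x ∩ U).Nonempty → ∀ᶠ y in l, (F y ∩ U).Nonempty

/-- Upper semicontinuity of a set-valued map at a point along a filter `l`. -/
def SVUpperSemicontinuousAt (F : E → Set E) (l : Filter E) (x : E) : Prop :=
  ∀ U : Set E, IsOpen U → F x ⊆ U → ∀ᶠ y in l, F y ⊆ U

/-- Continuity (lower and upper semicontinuity) of a set-valued map at `x` along `l`. -/
def SVContinuousAt (F : E → Set E) (l : Filter E) (x : E) : Prop :=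
  SVLowerSemicontinuousAt F l x ∧ SVUpperSemicontinuousAt F l x

/-- Continuity of a set-valued map. -/
def SVContinuous (F : E → Set E) : Prop := ∀ x, SVContinuousAt F (𝓝 x) x

/-- Local boundedness of a set-valued map. -/
def SVLocallyBounded (F : E → Set E) : Prop :=
  ∀ x : E, ∃ N ∈ 𝓝 x, ∃ M : ℝ, ∀ y ∈ N, ∀ v ∈ F y, ‖v‖ ≤ M

/-- One-sided local Lipschitz continuity of a set-valued map. -/
def OneSidedLocallyLipschitz (F : E → Set E) : Prop :=
  ∀ N : Set E, N.Nonempty → IsCompact N → ∃ k > 0, ∀ x₁ ∈ N, ∀ x₂ ∈ N,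
    ∀ w₁ ∈ F x₁, ∃ w₂ ∈ F x₂, ⟪x₁ - x₂, w₁⟫ ≤ ⟪x₁ - x₂, w₂⟫ + k * ‖x₁ - x₂‖ ^ 2

/-- The standing assumption (SA): `C` closed; `F x` nonempty, closed, convex on `C`;
`F` continuous and one-sided locally Lipschitz. -/
structure StandingAssumption (F : E → Set E) (C : Set E) : Prop where
  closed_C : IsClosed C
  nonempty_images : ∀ x ∈ C, (F x).Nonempty
  closed_images : ∀ x ∈ C, IsClosed (F x)
  convex_images : ∀ x ∈ C, Convex ℝ (F x)
  continuous : SVContinuous F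
  osLipschitz : OneSidedLocallyLipschitz F

/-- Admissible solution domains: `[0,T]` with `T ≥ 0`, or `[0,T)` with `T ∈ (0,∞]`. -/
def IsSolDomain (D : Set ℝ) : Prop :=
  (∃ T : ℝ, 0 ≤ T ∧ D = Icc 0 T) ∨ (∃ T : ℝ, 0 < T ∧ D = Ico 0 T) ∨ D = Ici 0

/-- `φ` is a solution of the constrained differential inclusion `ẋ ∈ F(x)`, `x ∈ C`,
on the domain `D`: it stays in `C` and is a locally absolutely continuous arc whose
derivative is an integrable selection of `F ∘ φ` almost everywhere. -/
def IsSolution (F : E → Set E) (C : Set E) (D : Set ℝ) (φ : ℝ → E) : Prop :=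
  IsSolDomain D ∧ (∀ t ∈ D, φ t ∈ C) ∧
  ∃ g : ℝ → E,
    (∀ᵐ t ∂(volume.restrict D), g t ∈ F (φ t)) ∧
    ∀ t ∈ D, IntervalIntegrable g volume 0 t ∧ φ t = φ 0 + ∫ s in (0:ℝ)..t, g s

/-- Forward invariance of `K` for the constrained differential inclusion. -/
def ForwardInvariant (F : E → Set E) (C K : Set E) : Prop :=
  ∀ D : Set ℝ, ∀ φ : ℝ → E, IsSolution F C D φ → φ 0 ∈ K → ∀ t ∈ D, φ t ∈ K

/-- The set 𝒫 of critical points: points of `∂K ∩ ∂C` every neighborhood of which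
meets `C \ K`. -/
def critSet (K C : Set E) : Set E :=
  {x | x ∈ frontier K ∩ frontier C ∧ ∀ N ∈ 𝓝 x, (N ∩ (C \ K)).Nonempty}

/-- The set of initial speeds `F_φ(x)` of an arc `φ` at `x`. -/
def initialSpeeds (φ : ℝ → E) (x : E) : Set E :=
  {v | ∃ t : ℕ → ℝ, (∀ i, 0 < t i) ∧ Tendsto t atTop (𝓝 0) ∧
    Tendsto (fun i => (t i)⁻¹ • (φ (t i) - x)) atTop (𝓝 v)}

/-- The metric projection of `y` onto `S`. -/
def projSet (S : Set E) (y : E) : Set E := {z ∈ S | dist y z = Metric.infDist y S}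

/-- `φ` leaves `K` immediately: for some `T > 0`, `φ(t) ∈ C \ K` on `(0,T]`. -/
def LeavesImmediately (K C : Set E) (D : Set ℝ) (φ : ℝ → E) : Prop :=
  ∃ T > 0, Ioc 0 T ⊆ D ∧ ∀ t ∈ Ioc 0 T, φ t ∈ C \ K

/-- Property (★): for some `T > 0`, `Proj_{∂K}(φ(t)) ∩ int C ≠ ∅` on `(0,T]`. -/
def PropStar (K C : Set E) (D : Set ℝ) (φ : ℝ → E) : Prop :=
  ∃ T > 0, Ioc 0 T ⊆ D ∧
    ∀ t ∈ Ioc 0 T, (projSet (frontier K) (φ t) ∩ interior C).Nonempty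

/-- Euclidean norm of the concatenated vector `(v₁, v₂) ∈ ℝ²ⁿ`. -/
noncomputable def pairNorm (v₁ v₂ : E) : ℝ := Real.sqrt (‖v₁‖ ^ 2 + ‖v₂‖ ^ 2)

/-- Assumption 1: `F(x) ⊆ T_K(x)` on 𝒫. -/
def Assumption1 (F : E → Set E) (K C : Set E) : Prop :=
  ∀ x ∈ critSet K C, F x ⊆ contingentCone K x

/-- Assumption 2: `F(x) ∩ T_{∂K ∩ ∂C}(x) = ∅` on 𝒫. -/
def Assumption2 (F : E → Set E) (K C : Set E) : Prop :=
  ∀ x ∈ critSet K C, F x ∩ contingentCone (frontier K ∩ frontier C) x = ∅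

/-- Assumption 3 (transversality) at a point `x`. -/
def Assumption3At (K C : Set E) (x : E) : Prop :=
  contingentCone (frontier K) x = adjacentCone (frontier K) x ∧
  contingentCone C x = adjacentCone C x ∧
  ∃ N ∈ 𝓝 x, ∃ c > 0, ∃ α ∈ Ico (0:ℝ) 1,
    ∀ x₁ ∈ (frontier K \ C) ∩ N, ∀ x₂ ∈ (frontier C \ frontier K) ∩ N,
      ∃ v₁ ∈ contingentCone (frontier K) x₁, ∃ v₂ ∈ contingentCone C x₂,
        pairNorm v₁ v₂ ≤ c * ‖x₁ - x₂‖ ∧ ‖(x₂ - x₁) - (v₁ - v₂)‖ ≤ α * ‖x₁ - x₂‖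

/-- Assumption 3 (transversality) on 𝒫. -/
def Assumption3 (K C : Set E) : Prop := ∀ x ∈ critSet K C, Assumption3At K C x

/-- The transversality condition (◇) for a pair of sets at `x₀`. -/
def TransversalAt (K₁ K₂ : Set E) (x₀ : E) : Prop :=
  ∃ N ∈ 𝓝 x₀, ∃ c > 0, ∃ α ∈ Ico (0:ℝ) 1,
    ∀ x₁ ∈ (frontier K₁ \ K₂) ∩ N, ∀ x₂ ∈ (frontier K₂ \ K₁) ∩ N,
      ∃ v₁ ∈ contingentCone K₁ x₁, ∃ v₂ ∈ contingentCone K₂ x₂,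
        pairNorm v₁ v₂ ≤ c * ‖x₁ - x₂‖ ∧ ‖(x₂ - x₁) - (v₁ - v₂)‖ ≤ α * ‖x₁ - x₂‖

/-!
Every initial speed `v` of `φ` at `x` is a limit of average velocities, so upper semicontinuity
and convexity of `F` put it in `F x`, hence in `T_K(x)` by Assumption 1. As `φ` runs in `C \ K`,
also `v ∈ T_C(x)` and `v ∈ T_{Kᶜ}(x)`; segments joining approximants in `K` and in `Kᶜ` cross
`∂K`, so `v ∈ T_{∂K}(x)`.

Transversality gives a linear error bound near `x`: a point `y ∈ ∂K \ C` lies within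
`κ · dist(y, C)` of `∂K ∩ ∂C`. To see it, minimise `‖q₁ - q₂‖ + λ‖q₁ - y‖ + λ‖q₂ - y'‖` over
`q₁ ∈ cl(∂K \ C)`, `q₂ ∈ C` near `x`, with `y'` a nearest point of `C` to `y`. The minimum is at
most `dist(y, C)`, which bounds `λ‖q₁ - y‖` and `λ‖q₂ - y'‖`; the first-order conditions along the
tangent vectors of Assumption 3 force `q₁` or `q₂` into `∂K ∩ ∂C` once `2λc < 1 - α`.

Since contingent and adjacent cones agree, approximants of `v` in `∂K` can be taken along the
same times as the points `φ(tᵢ) ∈ C`. If they lie outside `C`, the error bound moves them onto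
`∂K ∩ ∂C` at a cost `o(tᵢ)`, giving `v ∈ T_{∂K ∩ ∂C}(x)`, which Assumption 2 forbids for
`v ∈ F x`. The same argument with approximants in `∂K \ int C` excludes `v` from that cone.
-/

theorem IsPreconnected.inter_frontier_nonempty {X : Type*} [TopologicalSpace X] {s t : Set X}
    (hs : IsPreconnected s) (h₁ : (s ∩ t).Nonempty) (h₂ : (s \ t).Nonempty) :
    (s ∩ frontier t).Nonempty := by
  by_contra h
  have hcover : s ⊆ interior t ∪ interior tᶜ := by
    intro y hy
    by_contra hy'
    rw [mem_union, interior_compl, mem_compl_iff, not_or, not_not] at hy'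
    exact h ⟨y, hy, hy'.2, hy'.1⟩
  have hdisj : Disjoint (interior t) (interior tᶜ) :=
    disjoint_compl_right.mono interior_subset interior_subset
  rcases hs.subset_or_subset isOpen_interior isOpen_interior hdisj hcover with hst | hst
  · obtain ⟨y, hys, hyt⟩ := h₂
    exact hyt (interior_subset (hst hys))
  · obtain ⟨y, hys, hyt⟩ := h₁
    exact interior_subset (hst hys) hyt

theorem contingentCone_mono {S S' : Set E} (h : S ⊆ S') (x : E) :
    contingentCone S x ⊆ contingentCone S' x :=
  fun _ ⟨t, w, ht, ht0, hw, hS⟩ => ⟨t, w, ht, ht0, hw, fun i => h (hS i)⟩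

theorem mem_contingentCone_of_frequently_exists_norm_sub_le {S : Set E} {x v : E}
    {t ε : ℕ → ℝ} (ht : ∀ i, 0 < t i) (ht0 : Tendsto t atTop (𝓝 0))
    (hε : Tendsto ε atTop (𝓝 0))
    (h : ∃ᶠ i in atTop, ∃ p ∈ S, ‖p - (x + t i • v)‖ ≤ t i * ε i) :
    v ∈ contingentCone S x := by
  obtain ⟨ψ, hψ, hp⟩ := extraction_of_frequently_atTop h
  choose p hpS hpv using hp
  refine ⟨t ∘ ψ, fun i => (t (ψ i))⁻¹ • (p i - x), fun i => ht _,
    ht0.comp hψ.tendsto_atTop, ?_, fun i => ?_⟩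
  · rw [tendsto_iff_norm_sub_tendsto_zero]
    refine squeeze_zero (fun _ => norm_nonneg _) (fun i => ?_) (hε.comp hψ.tendsto_atTop)
    have hti := ht (ψ i)
    calc ‖(t (ψ i))⁻¹ • (p i - x) - v‖ = ‖(t (ψ i))⁻¹ • (p i - (x + t (ψ i) • v))‖ := by
          rw [smul_sub _ _ (x + _), smul_add, inv_smul_smul₀ hti.ne', smul_sub, sub_sub]
      _ = (t (ψ i))⁻¹ * ‖p i - (x + t (ψ i) • v)‖ := by
          rw [norm_smul, Real.norm_of_nonneg (inv_nonneg.mpr hti.le)]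
      _ ≤ ε (ψ i) := by
          rw [inv_mul_le_iff₀ hti]
          exact hpv i
  · show x + t (ψ i) • (t (ψ i))⁻¹ • (p i - x) ∈ S
    rw [smul_inv_smul₀ (ht (ψ i)).ne', add_sub_cancel]
    exact hpS i

theorem mem_contingentCone_of_frequently {S : Set E} {x v : E} {t : ℕ → ℝ} {w : ℕ → E}
    (ht : ∀ i, 0 < t i) (ht0 : Tendsto t atTop (𝓝 0)) (hw : Tendsto w atTop (𝓝 v))
    (hS : ∃ᶠ i in atTop, x + t i • w i ∈ S) : v ∈ contingentCone S x := by
  refine mem_contingentCone_of_frequently_exists_norm_sub_le ht ht0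
    (tendsto_iff_norm_sub_tendsto_zero.mp hw) (hS.mono fun i hi => ⟨_, hi, le_of_eq ?_⟩)
  rw [add_sub_add_left_eq_sub, ← smul_sub, norm_smul, Real.norm_of_nonneg (ht i).le]

theorem mem_contingentCone_of_mem_nhds {S : Set E} {x : E} (hS : S ∈ 𝓝 x) (v : E) :
    v ∈ contingentCone S x := by
  have ht0 : Tendsto (fun i : ℕ => 1 / ((i : ℝ) + 1)) atTop (𝓝 0) :=
    tendsto_one_div_add_atTop_nhds_zero_nat
  have hx : Tendsto (fun i : ℕ => x + (1 / ((i : ℝ) + 1)) • v) atTop (𝓝 x) := by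
    simpa using tendsto_const_nhds.add (ht0.smul_const v)
  exact mem_contingentCone_of_frequently (fun i => by positivity) ht0 tendsto_const_nhds
    (hx.eventually hS).frequently

theorem mem_contingentCone_of_segment_inter_nonempty {S : Set E} {x v : E} {s t : ℕ → ℝ}
    {u w : ℕ → E} (hs : ∀ i, 0 < s i) (ht : ∀ i, 0 < t i) (hs0 : Tendsto s atTop (𝓝 0))
    (ht0 : Tendsto t atTop (𝓝 0)) (hu : Tendsto u atTop (𝓝 v)) (hw : Tendsto w atTop (𝓝 v))
    (hS : ∀ i, (segment ℝ (x + s i • u i) (x + t i • w i) ∩ S).Nonempty) :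
    v ∈ contingentCone S x := by
  choose p hpseg hpS using hS
  choose a b ha hb hab hp using hpseg
  have hμ : ∀ i, 0 < a i * s i + b i * t i := fun i => by
    rcases (ha i).lt_or_eq with ha' | ha'
    · exact add_pos_of_pos_of_nonneg (mul_pos ha' (hs i)) (mul_nonneg (hb i) (ht i).le)
    · have : b i = 1 := by linarith [hab i]
      simp [← ha', this, ht i]
  refine mem_contingentCone_of_frequently_exists_norm_sub_le hμ ?_
    (by simpa using ((tendsto_iff_norm_sub_tendsto_zero.mp hu).add
      (tendsto_iff_norm_sub_tendsto_zero.mp hw)))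
    (Frequently.of_forall fun i => ⟨p i, hpS i, ?_⟩)
  · refine squeeze_zero (fun i => (hμ i).le) (fun i => ?_) (by simpa using hs0.add ht0)
    nlinarith [hs i, ht i, ha i, hb i, hab i]
  · have hdiff : p i - (x + (a i * s i + b i * t i) • v) =
        (a i * s i) • (u i - v) + (b i * t i) • (w i - v) := by
      rw [← hp i, show b i = 1 - a i by linarith [hab i]]
      module
    rw [hdiff]
    refine (norm_add_le _ _).trans ?_
    rw [norm_smul, norm_smul, Real.norm_of_nonneg (mul_nonneg (ha i) (hs i).le),
      Real.norm_of_nonneg (mul_nonneg (hb i) (ht i).le)]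
    nlinarith [mul_nonneg (ha i) (hs i).le, mul_nonneg (hb i) (ht i).le,
      norm_nonneg (u i - v), norm_nonneg (w i - v)]

theorem contingentCone_inter_contingentCone_compl_subset_frontier (K : Set E) (x : E) :
    contingentCone K x ∩ contingentCone Kᶜ x ⊆ contingentCone (frontier K) x := by
  rintro v ⟨⟨s, u, hs, hs0, hu, huK⟩, ⟨t, w, ht, ht0, hw, hwK⟩⟩
  exact mem_contingentCone_of_segment_inter_nonempty hs ht hs0 ht0 hu hw fun i =>
    (convex_segment _ _).isPreconnected.inter_frontier_nonempty
      ⟨_, left_mem_segment ℝ _ _, huK i⟩ ⟨_, right_mem_segment ℝ _ _, hwK i⟩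

theorem initialSpeeds_eq_setOf_mapClusterPt (φ : ℝ → E) (x : E) :
    initialSpeeds φ x = {v | MapClusterPt v (𝓝[>] 0) fun t => t⁻¹ • (φ t - x)} := by
  ext v
  constructor
  · rintro ⟨t, ht, ht0, hv⟩
    exact hv.mapClusterPt.of_comp (tendsto_nhdsWithin_iff.mpr ⟨ht0, .of_forall ht⟩)
  · intro hv
    obtain ⟨ψ, hψv, hψ⟩ := hv.exists_seq_tendsto
    obtain ⟨hψ0, hψpos⟩ := tendsto_nhdsWithin_iff.mp hψ
    obtain ⟨N, hN⟩ := eventually_atTop.mp hψpos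
    exact ⟨fun i => ψ (i + N), fun i => hN _ (Nat.le_add_left _ _),
      hψ0.comp (tendsto_add_atTop_nat N), hψv.comp (tendsto_add_atTop_nat N)⟩

theorem isClosed_initialSpeeds (φ : ℝ → E) (x : E) : IsClosed (initialSpeeds φ x) := by
  rw [initialSpeeds_eq_setOf_mapClusterPt]
  exact isClosed_setOfPred_clusterPt

theorem initialSpeeds_subset_of_eventually_mem {φ : ℝ → E} {x : E} {U : Set E}
    (hU : IsClosed U) (h : ∀ᶠ t in 𝓝[>] 0, t⁻¹ • (φ t - x) ∈ U) : initialSpeeds φ x ⊆ U := by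
  rintro v ⟨t, ht, ht0, hv⟩
  exact hU.mem_of_tendsto hv ((tendsto_nhdsWithin_iff.mpr ⟨ht0, .of_forall ht⟩).eventually h)

theorem initialSpeeds_subset_contingentCone {φ : ℝ → E} {x : E} {S : Set E}
    (hS : ∀ᶠ t in 𝓝[>] 0, φ t ∈ S) : initialSpeeds φ x ⊆ contingentCone S x := by
  rintro v ⟨t, ht, ht0, hv⟩
  refine mem_contingentCone_of_frequently ht ht0 hv ?_
  refine ((tendsto_nhdsWithin_iff.mpr ⟨ht0, .of_forall ht⟩).eventually hS).frequently.mono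
    fun i hi => ?_
  rwa [smul_inv_smul₀ (ht i).ne', add_sub_cancel]

theorem inv_smul_integral_mem_of_ae_mem [CompleteSpace E] {g : ℝ → E} {U : Set E} {t : ℝ}
    (ht : 0 < t) (hU : Convex ℝ U) (hUc : IsClosed U) (hg : IntervalIntegrable g volume 0 t)
    (hgU : ∀ᵐ s ∂volume.restrict (Ioc 0 t), g s ∈ U) : t⁻¹ • ∫ s in (0 : ℝ)..t, g s ∈ U := by
  have hvol : volume (Ioc 0 t) ≠ 0 := by simp [ht]
  have := hU.set_average_mem hUc hvol measure_Ioc_lt_top.ne hgU hg.1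
  rwa [← uIoc_of_le ht.le, interval_average_eq, sub_zero] at this

theorem IsSolution.tendsto_nhdsGT {F : E → Set E} {C : Set E} {D : Set ℝ} {φ : ℝ → E}
    (hsol : IsSolution F C D φ) {T : ℝ} (hT : 0 < T) (hTD : Ioc 0 T ⊆ D) :
    Tendsto φ (𝓝[>] 0) (𝓝 (φ 0)) := by
  obtain ⟨-, -, g, -, hg⟩ := hsol
  have hprim := intervalIntegral.continuousOn_primitive_interval' (hg T (hTD ⟨hT, le_rfl⟩)).1
    left_mem_uIcc 0 left_mem_uIcc
  rw [ContinuousWithinAt, intervalIntegral.integral_same, uIcc_of_le hT.le] at hprim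
  have hint := (hprim.mono_left (nhdsWithin_mono _ Ioc_subset_Icc_self)).const_add (φ 0)
  rw [nhdsWithin_Ioc_eq_nhdsGT hT, add_zero] at hint
  exact hint.congr' (mem_of_superset (Ioc_mem_nhdsGT hT) fun t ht => (hg t (hTD ht)).2.symm)

theorem IsSolution.initialSpeeds_subset [CompleteSpace E] {F : E → Set E} {C : Set E}
    {D : Set ℝ} {φ : ℝ → E} (hsol : IsSolution F C D φ) {T : ℝ} (hT : 0 < T)
    (hTD : Ioc 0 T ⊆ D) (husc : SVUpperSemicontinuousAt F (𝓝 (φ 0)) (φ 0))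
    (hconv : Convex ℝ (F (φ 0))) (hcl : IsClosed (F (φ 0))) :
    initialSpeeds φ (φ 0) ⊆ F (φ 0) := by
  have hcont := hsol.tendsto_nhdsGT hT hTD
  obtain ⟨-, -, g, hgF, hg⟩ := hsol
  intro v hv
  rw [← hcl.closure_eq, Metric.closure_eq_iInter_cthickening]
  refine mem_iInter₂.mpr fun ε hε => Metric.closure_thickening_subset_cthickening ε _
    (initialSpeeds_subset_of_eventually_mem isClosed_closure ?_ hv)
  obtain ⟨u, hu, hsub⟩ := mem_nhdsGT_iff_exists_Ioo_subset.mp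
    (hcont.eventually (husc _ Metric.isOpen_thickening (Metric.self_subset_thickening hε _)))
  filter_upwards [Ioo_mem_nhdsGT (lt_min hu hT)] with t ht
  have htT : Ioc 0 t ⊆ Ioc 0 T := Ioc_subset_Ioc_right (ht.2.le.trans (min_le_right _ _))
  obtain ⟨hgt, hφt⟩ := hg t (hTD (htT ⟨ht.1, le_rfl⟩))
  rw [hφt, add_sub_cancel_left]
  refine inv_smul_integral_mem_of_ae_mem ht.1 (hconv.thickening ε).closure isClosed_closure hgt ?_
  filter_upwards [ae_restrict_of_ae_restrict_of_subset (htT.trans hTD) hgF,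
    ae_restrict_mem measurableSet_Ioc] with s hs hsI
  exact subset_closure (hsub ⟨hsI.1, hsI.2.trans_lt (ht.2.trans_le (min_le_left _ _))⟩ hs)

theorem two_mul_norm_mul_norm_add_le (A h : E) :
    2 * ‖A‖ * ‖A + h‖ ≤ 2 * ‖A‖ ^ 2 + 2 * ⟪A, h⟫ + ‖h‖ ^ 2 := by
  nlinarith [norm_add_sq_real A h, sq_nonneg (‖A‖ - ‖A + h‖)]

theorem neg_mul_le_inner_of_isLocalMinOn {S : Set E} {p b y v : E} {lam : ℝ} (hlam : 0 ≤ lam)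
    (hmin : IsLocalMinOn (fun q => ‖q - b‖ + lam * ‖q - y‖) S p)
    (hv : v ∈ contingentCone S p) :
    -(lam * ‖v‖ * ‖p - b‖) ≤ ⟪p - b, v⟫ := by
  obtain ⟨σ, ω, hσ, hσ0, hω, hmem⟩ := hv
  have hnear : Tendsto (fun k => p + σ k • ω k) atTop (𝓝[S] p) :=
    tendsto_nhdsWithin_iff.mpr
      ⟨by simpa using tendsto_const_nhds.add (hσ0.smul hω), .of_forall hmem⟩
  -- minimality at `p + σ k • ω k`, expanded to first order and divided by `σ k`
  have hkey : ∀ᶠ k in atTop,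
      0 ≤ 2 * ⟪p - b, ω k⟫ + σ k * ‖ω k‖ ^ 2 + 2 * lam * ‖ω k‖ * ‖p - b‖ := by
    filter_upwards [hnear.eventually hmin] with k hk
    have hy : ‖p + σ k • ω k - y‖ ≤ ‖p - y‖ + σ k * ‖ω k‖ := by
      rw [add_sub_right_comm]
      exact (norm_add_le _ _).trans_eq (by rw [norm_smul, Real.norm_of_nonneg (hσ k).le])
    have hexp := two_mul_norm_mul_norm_add_le (p - b) (σ k • ω k)
    rw [inner_smul_right, norm_smul, Real.norm_of_nonneg (hσ k).le] at hexp
    rw [show p + σ k • ω k - b = p - b + σ k • ω k by abel] at hk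
    have hσω := mul_nonneg (hσ k).le (norm_nonneg (ω k))
    have : 0 ≤ σ k * (2 * ⟪p - b, ω k⟫ + σ k * ‖ω k‖ ^ 2 + 2 * lam * ‖ω k‖ * ‖p - b‖) := by
      nlinarith [mul_le_mul_of_nonneg_left hy hlam, norm_nonneg (p - b)]
    exact nonneg_of_mul_nonneg_right (by linarith) (hσ k)
  have hlim : Tendsto (fun k => 2 * ⟪p - b, ω k⟫ + σ k * ‖ω k‖ ^ 2 + 2 * lam * ‖ω k‖ * ‖p - b‖)
      atTop (𝓝 (2 * ⟪p - b, v⟫ + 0 * ‖v‖ ^ 2 + 2 * lam * ‖v‖ * ‖p - b‖)) :=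
    (((tendsto_const_nhds.inner hω).const_mul 2).add (hσ0.mul (hω.norm.pow 2))).add
      (((hω.norm.const_mul (2 * lam)).mul_const ‖p - b‖))
  linarith [ge_of_tendsto hlim hkey]

theorem eq_zero_of_transversal {A v₁ v₂ : E} {lam c α : ℝ} (hlam : 0 ≤ lam)
    (h₁ : -(lam * ‖v₁‖ * ‖A‖) ≤ ⟪A, v₁⟫) (h₂ : -(lam * ‖v₂‖ * ‖A‖) ≤ ⟪-A, v₂⟫)
    (hv₁ : ‖v₁‖ ≤ c * ‖A‖) (hv₂ : ‖v₂‖ ≤ c * ‖A‖) (herr : ‖-A - (v₁ - v₂)‖ ≤ α * ‖A‖)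
    (hsmall : 2 * lam * c < 1 - α) : A = 0 := by
  have hcs := real_inner_le_norm (-A) (-A - (v₁ - v₂))
  simp only [inner_sub_right, inner_neg_left, inner_neg_right, neg_neg,
    real_inner_self_eq_norm_sq, norm_neg] at hcs h₂
  have hA := norm_nonneg A
  have e₁ := mul_le_mul_of_nonneg_right (mul_le_mul_of_nonneg_left hv₁ hlam) hA
  have e₂ := mul_le_mul_of_nonneg_right (mul_le_mul_of_nonneg_left hv₂ hlam) hA
  have key : (1 - α - 2 * lam * c) * ‖A‖ ^ 2 ≤ 0 := by
    nlinarith [mul_le_mul_of_nonneg_left herr hA]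
  by_contra hne
  nlinarith [mul_pos (sub_pos.mpr hsmall) (pow_pos (norm_pos_iff.mpr hne) 2)]

section NormedGroup

variable {V : Type*} [NormedAddCommGroup V]

theorem norm_le_pairNorm_left (v₁ v₂ : V) : ‖v₁‖ ≤ pairNorm v₁ v₂ :=
  Real.le_sqrt_of_sq_le (le_add_of_nonneg_right (sq_nonneg _))

theorem norm_le_pairNorm_right (v₁ v₂ : V) : ‖v₂‖ ≤ pairNorm v₁ v₂ :=
  Real.le_sqrt_of_sq_le (le_add_of_nonneg_left (sq_nonneg _))

noncomputable def couplingCost (lam : ℝ) (y₁ y₂ : V) (q : V × V) : ℝ :=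
  ‖q.1 - q.2‖ + lam * ‖q.1 - y₁‖ + lam * ‖q.2 - y₂‖

variable {W₁ W₂ : Set V} {lam : ℝ} {y₁ y₂ : V}

theorem exists_isMinOn_couplingCost (h₁ : IsCompact W₁) (h₂ : IsCompact W₂) (hlam : 0 ≤ lam)
    (hy₁ : y₁ ∈ W₁) (hy₂ : y₂ ∈ W₂) :
    ∃ p ∈ W₁ ×ˢ W₂, IsMinOn (couplingCost lam y₁ y₂) (W₁ ×ˢ W₂) p ∧
      lam * ‖p.1 - y₁‖ ≤ ‖y₁ - y₂‖ ∧ lam * ‖p.2 - y₂‖ ≤ ‖y₁ - y₂‖ := by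
  obtain ⟨p, hp, hmin⟩ := (h₁.prod h₂).exists_isMinOn ⟨_, mk_mem_prod hy₁ hy₂⟩
    (by unfold couplingCost; fun_prop : Continuous (couplingCost lam y₁ y₂)).continuousOn
  have hle := isMinOn_iff.mp hmin _ (mk_mem_prod hy₁ hy₂)
  simp only [couplingCost, sub_self, norm_zero, mul_zero, add_zero] at hle
  have := mul_nonneg hlam (norm_nonneg (p.1 - y₁))
  have := mul_nonneg hlam (norm_nonneg (p.2 - y₂))
  have := norm_nonneg (p.1 - p.2)
  exact ⟨p, hp, hmin, by linarith, by linarith⟩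

theorem IsMinOn.isLocalMinOn_fst_couplingCost {S : Set V} {p : V × V}
    (hmin : IsMinOn (couplingCost lam y₁ y₂) (W₁ ×ˢ W₂) p) (hp₂ : p.2 ∈ W₂)
    (hW₁ : W₁ ∈ 𝓝[S] p.1) : IsLocalMinOn (fun q => ‖q - p.2‖ + lam * ‖q - y₁‖) S p.1 := by
  filter_upwards [hW₁] with q hq
  have := isMinOn_iff.mp hmin (q, p.2) ⟨hq, hp₂⟩
  simp only [couplingCost] at this
  linarith

theorem IsMinOn.isLocalMinOn_snd_couplingCost {S : Set V} {p : V × V}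
    (hmin : IsMinOn (couplingCost lam y₁ y₂) (W₁ ×ˢ W₂) p) (hp₁ : p.1 ∈ W₁)
    (hW₂ : W₂ ∈ 𝓝[S] p.2) : IsLocalMinOn (fun q => ‖q - p.1‖ + lam * ‖q - y₂‖) S p.2 := by
  filter_upwards [hW₂] with q hq
  have := isMinOn_iff.mp hmin (p.1, q) ⟨hp₁, hq⟩
  simp only [couplingCost, norm_sub_rev p.1] at this
  linarith

end NormedGroup

/-- The transversality estimate of Assumption 3 on the neighbourhood `N`. -/
def FrontierTransversalOn (K C N : Set E) (c α : ℝ) : Prop :=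
  ∀ x₁ ∈ (frontier K \ C) ∩ N, ∀ x₂ ∈ (frontier C \ frontier K) ∩ N,
    ∃ v₁ ∈ contingentCone (frontier K) x₁, ∃ v₂ ∈ contingentCone C x₂,
      pairNorm v₁ v₂ ≤ c * ‖x₁ - x₂‖ ∧ ‖(x₂ - x₁) - (v₁ - v₂)‖ ≤ α * ‖x₁ - x₂‖

def FrontierErrorBound (K C : Set E) (x : E) : Prop :=
  ∃ κ, 0 ≤ κ ∧ ∀ᶠ y in 𝓝 x, y ∈ frontier K \ C →
    ∃ z ∈ frontier K ∩ frontier C, ‖z - y‖ ≤ κ * Metric.infDist y C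

theorem mem_frontier_inter_frontier_of_isLocalMinOn {K C N : Set E} {c α lam : ℝ}
    (htr : FrontierTransversalOn K C N c α)
    (hlam : 0 ≤ lam) (hlam1 : lam < 1) (hsmall : 2 * lam * c < 1 - α)
    {p₁ p₂ y₁ y₂ : E} (hp₁ : p₁ ∈ frontier K \ C) (hp₂ : p₂ ∈ C) (hp₁N : p₁ ∈ N) (hp₂N : p₂ ∈ N)
    (hmin₁ : IsLocalMinOn (fun q => ‖q - p₂‖ + lam * ‖q - y₁‖) (frontier K) p₁)
    (hmin₂ : IsLocalMinOn (fun q => ‖q - p₁‖ + lam * ‖q - y₂‖) C p₂) :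
    p₂ ∈ frontier K ∩ frontier C := by
  have hA : p₁ - p₂ ≠ 0 := sub_ne_zero.mpr fun h => hp₁.2 (h ▸ hp₂)
  have hopt₂ : ∀ v ∈ contingentCone C p₂, -(lam * ‖v‖ * ‖p₁ - p₂‖) ≤ ⟪-(p₁ - p₂), v⟫ :=
    fun v hv => by
      simpa only [neg_sub, norm_sub_rev p₂] using neg_mul_le_inner_of_isLocalMinOn hlam hmin₂ hv
  -- at an interior point of `C`, the direction towards `p₁` would decrease the cost
  have hfrC : p₂ ∈ frontier C := by
    refine ⟨subset_closure hp₂, fun hint => hA ?_⟩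
    have h := hopt₂ (p₁ - p₂)
      (mem_contingentCone_of_mem_nhds (mem_interior_iff_mem_nhds.mp hint) _)
    rw [inner_neg_left, real_inner_self_eq_norm_sq] at h
    by_contra hne
    have hpos := norm_pos_iff.mpr hne
    nlinarith [mul_pos (sub_pos.mpr hlam1) (mul_pos hpos hpos)]
  refine ⟨?_, hfrC⟩
  by_contra hK
  apply hA
  obtain ⟨v₁, hv₁, v₂, hv₂, hpair, herr⟩ := htr p₁ ⟨hp₁, hp₁N⟩ p₂ ⟨⟨hfrC, hK⟩, hp₂N⟩
  refine eq_zero_of_transversal hlam (neg_mul_le_inner_of_isLocalMinOn hlam hmin₁ hv₁)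
    (hopt₂ v₂ hv₂) ((norm_le_pairNorm_left v₁ v₂).trans hpair)
    ((norm_le_pairNorm_right v₁ v₂).trans hpair) ?_ hsmall
  rwa [neg_sub]

theorem exists_mem_frontier_inter_frontier_of_transversal [ProperSpace E] {K C N : Set E}
    (hC : IsClosed C) {x : E} (hxC : x ∈ C) {c α lam ρ r : ℝ}
    (htr : FrontierTransversalOn K C N c α)
    (hlam : 0 < lam) (hlam1 : lam < 1) (hsmall : 2 * lam * c < 1 - α)
    (hρN : Metric.closedBall x ρ ⊆ N) (hrρ : r * (1 + 2 * lam) = lam * ρ)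
    {y₁ : E} (hy₁ : y₁ ∈ frontier K \ C) (hy₁x : ‖y₁ - x‖ < r) :
    ∃ z ∈ frontier K ∩ frontier C, ‖z - y₁‖ ≤ (lam⁻¹ + 1) * Metric.infDist y₁ C := by
  obtain ⟨y₂, hy₂C, hy₂⟩ := hC.exists_infDist_eq_dist ⟨x, hxC⟩ y₁
  rw [hy₂, dist_eq_norm]
  have hd : ‖y₁ - y₂‖ ≤ ‖y₁ - x‖ := by
    rw [← dist_eq_norm, ← dist_eq_norm, ← hy₂]
    exact Metric.infDist_le_dist_of_mem hxC
  have hy₂x : ‖y₂ - x‖ ≤ ‖y₁ - y₂‖ + ‖y₁ - x‖ := by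
    rw [norm_sub_rev y₁ y₂]
    exact norm_sub_le_norm_sub_add_norm_sub y₂ y₁ x
  have hr : 0 < r := (norm_nonneg _).trans_lt hy₁x
  have h2r : 2 * r ≤ ρ := by nlinarith
  obtain ⟨p, ⟨⟨hp₁W, hp₁B⟩, hp₂C, hp₂B⟩, hmin, hb₁, hb₂⟩ := exists_isMinOn_couplingCost
    ((isCompact_closedBall x ρ).inter_left isClosed_closure)
    ((isCompact_closedBall x ρ).inter_left hC) hlam.le
    (W₁ := closure (frontier K \ C) ∩ Metric.closedBall x ρ)
    ⟨subset_closure hy₁, by rw [Metric.mem_closedBall, dist_eq_norm]; linarith⟩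
    ⟨hy₂C, by rw [Metric.mem_closedBall, dist_eq_norm]; linarith⟩
  have hball : ∀ q z, lam * ‖q - z‖ + lam * ‖z - x‖ < lam * ρ → q ∈ Metric.ball x ρ :=
    fun q z h => by
      rw [Metric.mem_ball, dist_eq_norm]
      nlinarith [norm_sub_le_norm_sub_add_norm_sub q z x]
  have hp₁x := hball p.1 y₁ (by nlinarith)
  have hp₂x := hball p.2 y₂ (by nlinarith)
  have hdiv : ∀ a, lam * a ≤ ‖y₁ - y₂‖ → a ≤ lam⁻¹ * ‖y₁ - y₂‖ := fun a ha => by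
    rwa [inv_mul_eq_div, le_div_iff₀' hlam]
  have hd0 := norm_nonneg (y₁ - y₂)
  have hp₁K : p.1 ∈ frontier K := isClosed_frontier.closure_subset_iff.mpr sdiff_subset hp₁W
  by_cases hp₁C : p.1 ∈ C
  · refine ⟨p.1, ⟨hp₁K, ?_⟩, ?_⟩
    · rw [frontier_eq_closure_inter_closure]
      exact ⟨subset_closure hp₁C, closure_mono (fun _ h => h.2) hp₁W⟩
    · linarith [hdiv _ hb₁, add_mul lam⁻¹ 1 ‖y₁ - y₂‖]
  · have hW₁ : closure (frontier K \ C) ∩ Metric.closedBall x ρ ∈ 𝓝[frontier K] p.1 :=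
      mem_of_superset (inter_mem_nhdsWithin _ (inter_mem (hC.isOpen_compl.mem_nhds hp₁C)
        (Metric.isOpen_ball.mem_nhds hp₁x))) fun q ⟨hqK, hqC, hqB⟩ =>
          ⟨subset_closure ⟨hqK, hqC⟩, Metric.ball_subset_closedBall hqB⟩
    have hW₂ : C ∩ Metric.closedBall x ρ ∈ 𝓝[C] p.2 := inter_mem_nhdsWithin C
      (mem_of_superset (Metric.isOpen_ball.mem_nhds hp₂x) Metric.ball_subset_closedBall)
    refine ⟨p.2, mem_frontier_inter_frontier_of_isLocalMinOn htr hlam.le hlam1 hsmall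
      ⟨hp₁K, hp₁C⟩ hp₂C (hρN hp₁B) (hρN hp₂B) (hmin.isLocalMinOn_fst_couplingCost ⟨hp₂C, hp₂B⟩ hW₁)
      (hmin.isLocalMinOn_snd_couplingCost ⟨hp₁W, hp₁B⟩ hW₂), ?_⟩
    have := norm_sub_le_norm_sub_add_norm_sub p.2 y₂ y₁
    rw [norm_sub_rev y₂] at this
    linarith [hdiv _ hb₂, add_mul lam⁻¹ 1 ‖y₁ - y₂‖]

theorem frontierErrorBound_of_transversal [ProperSpace E] {K C N : Set E} (hC : IsClosed C)
    {x : E} (hxC : x ∈ C) (hN : N ∈ 𝓝 x) {c α : ℝ} (hα : α < 1)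
    (htr : FrontierTransversalOn K C N c α) :
    FrontierErrorBound K C x := by
  obtain ⟨lam, hlam, hlam1, hsmall⟩ : ∃ lam : ℝ, 0 < lam ∧ lam < 1 ∧ 2 * lam * c < 1 - α := by
    have h0 : Tendsto (fun lam : ℝ => 2 * lam * c) (𝓝 0) (𝓝 0) := by
      simpa using ((tendsto_id (x := 𝓝 (0 : ℝ))).const_mul 2).mul_const c
    have hev : ∀ᶠ lam in 𝓝[>] (0 : ℝ), 0 < lam ∧ lam < 1 ∧ 2 * lam * c < 1 - α :=
      Eventually.and self_mem_nhdsWithin (((eventually_lt_nhds one_pos).and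
        (h0.eventually_lt_const (by linarith))).filter_mono nhdsWithin_le_nhds)
    exact hev.exists
  obtain ⟨ρ, hρ, hρN⟩ := Metric.nhds_basis_closedBall.mem_iff.mp hN
  have hrρ : lam * ρ / (1 + 2 * lam) * (1 + 2 * lam) = lam * ρ := by field_simp
  refine ⟨lam⁻¹ + 1, by positivity, ?_⟩
  filter_upwards [Metric.ball_mem_nhds x (by positivity : 0 < lam * ρ / (1 + 2 * lam))]
    with y hyx hy
  rw [Metric.mem_ball, dist_eq_norm] at hyx
  exact exists_mem_frontier_inter_frontier_of_transversal hC hxC htr hlam hlam1 hsmall hρN hrρ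
    hy hyx

namespace FrontierErrorBound

variable {K C : Set E} {x : E}

theorem mem_contingentCone (hE : FrontierErrorBound K C x) {v : E} {r : ℕ → ℝ} {a b : ℕ → E}
    (hr : ∀ m, 0 < r m) (hr0 : Tendsto r atTop (𝓝 0)) (ha : Tendsto a atTop (𝓝 v))
    (hb : Tendsto b atTop (𝓝 v)) (haK : ∀ᶠ m in atTop, x + r m • a m ∈ frontier K \ C)
    (hbC : ∀ m, x + r m • b m ∈ C) : v ∈ contingentCone (frontier K ∩ frontier C) x := by
  obtain ⟨κ, hκ, hE⟩ := hE
  have hy : Tendsto (fun m => x + r m • a m) atTop (𝓝 x) := by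
    simpa using tendsto_const_nhds.add (hr0.smul ha)
  have hnorm : ∀ m (u : E), ‖x + r m • a m - (x + r m • u)‖ = r m * ‖a m - u‖ := fun m u => by
    rw [add_sub_add_left_eq_sub, ← smul_sub, norm_smul, Real.norm_of_nonneg (hr m).le]
  refine mem_contingentCone_of_frequently_exists_norm_sub_le hr hr0
    (ε := fun m => κ * ‖a m - b m‖ + ‖a m - v‖)
    (by simpa using ((ha.sub hb).norm.const_mul κ).add (ha.sub_const v).norm) ?_
  refine Eventually.frequently ?_
  filter_upwards [hy.eventually hE, haK] with m hm hmK
  obtain ⟨z, hz, hzy⟩ := hm hmK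
  refine ⟨z, hz, ?_⟩
  have hdist : Metric.infDist (x + r m • a m) C ≤ r m * ‖a m - b m‖ :=
    (Metric.infDist_le_dist_of_mem (hbC m)).trans_eq (by rw [dist_eq_norm, hnorm])
  calc ‖z - (x + r m • v)‖
      ≤ ‖z - (x + r m • a m)‖ + ‖x + r m • a m - (x + r m • v)‖ :=
        norm_sub_le_norm_sub_add_norm_sub _ _ _
    _ ≤ κ * (r m * ‖a m - b m‖) + r m * ‖a m - v‖ :=
        add_le_add (hzy.trans (mul_le_mul_of_nonneg_left hdist hκ)) (hnorm m v).le
    _ = r m * (κ * ‖a m - b m‖ + ‖a m - v‖) := by ring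

theorem adjacentCone_inter_contingentCone_subset (hE : FrontierErrorBound K C x)
    (hC : IsClosed C) :
    adjacentCone (frontier K) x ∩ contingentCone C x ⊆ contingentCone (frontier K ∩ C) x := by
  rintro v ⟨hvK, t, w, ht, ht0, hw, hwC⟩
  obtain ⟨d, hd, hdK⟩ := hvK t ht ht0
  by_cases hfreq : ∃ᶠ i in atTop, x + t i • d i ∈ C
  · exact mem_contingentCone_of_frequently ht ht0 hd (hfreq.mono fun i hi => ⟨hdK i, hi⟩)
  · refine contingentCone_mono (inter_subset_inter_right _ hC.frontier_subset) x
      (hE.mem_contingentCone ht ht0 hd hw ?_ hwC)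
    filter_upwards [not_frequently.mp hfreq] with i hi using ⟨hdK i, hi⟩

theorem contingentCone_diff_interior_inter_adjacentCone_subset
    (hE : FrontierErrorBound K C x) :
    contingentCone (frontier K \ interior C) x ∩ adjacentCone C x ⊆
      contingentCone (frontier K ∩ frontier C) x := by
  rintro v ⟨⟨r, e, hr, hr0, he, heK⟩, hvC⟩
  obtain ⟨b, hb, hbC⟩ := hvC r hr hr0
  by_cases hfreq : ∃ᶠ m in atTop, x + r m • e m ∈ C
  · exact mem_contingentCone_of_frequently hr hr0 he
      (hfreq.mono fun m hm => ⟨(heK m).1, subset_closure hm, (heK m).2⟩)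
  · refine hE.mem_contingentCone hr hr0 he hb ?_ hbC
    filter_upwards [not_frequently.mp hfreq] with m hm using ⟨(heK m).1, hm⟩

end FrontierErrorBound

theorem clInitialSpeeds_subset_general {n : ℕ} (F : Euc n → Set (Euc n)) (C K : Set (Euc n))
    (hSA : StandingAssumption F C)
    (h1 : Assumption1 F K C) (h2 : Assumption2 F K C) (h3 : Assumption3 K C)
    (D : Set ℝ) (φ : ℝ → Euc n) (hsol : IsSolution F C D φ)
    (x : Euc n) (hx0 : φ 0 = x) (hxP : x ∈ critSet K C)
    (hleave : LeavesImmediately K C D φ) :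
    closure (initialSpeeds φ x) ⊆
      contingentCone (frontier K ∩ C) x \ contingentCone (frontier K \ interior C) x := by
  obtain ⟨T, hT, hTD, hφCK⟩ := hleave
  have hφ : ∀ᶠ t in 𝓝[>] 0, φ t ∈ C \ K := mem_of_superset (Ioc_mem_nhdsGT hT) hφCK
  have hxC : x ∈ C := hSA.closed_C.frontier_subset hxP.1.2
  obtain ⟨hKadj, hCadj, N, hN, c, -, α, hα, htr⟩ := h3 x hxP
  have hE := frontierErrorBound_of_transversal hSA.closed_C hxC hN hα.2 htr
  rw [(isClosed_initialSpeeds φ x).closure_eq]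
  intro v hv
  have hvF : v ∈ F x := by
    subst hx0
    exact hsol.initialSpeeds_subset hT hTD (hSA.continuous _).2 (hSA.convex_images _ hxC)
      (hSA.closed_images _ hxC) hv
  have hvC : v ∈ contingentCone C x :=
    initialSpeeds_subset_contingentCone (hφ.mono fun _ h => h.1) hv
  have hvK : v ∈ contingentCone (frontier K) x :=
    contingentCone_inter_contingentCone_compl_subset_frontier K x
      ⟨h1 x hxP hvF, initialSpeeds_subset_contingentCone (hφ.mono fun _ h => h.2) hv⟩
  refine ⟨hE.adjacentCone_inter_contingentCone_subset hSA.closed_C ⟨hKadj ▸ hvK, hvC⟩,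
    fun hv' => ?_⟩
  have := hE.contingentCone_diff_interior_inter_adjacentCone_subset ⟨hv', hCadj ▸ hvC⟩
  exact (h2 x hxP).subset ⟨hvF, this⟩

/-- Under Assumptions 1–3, if a solution starting from `x ∈ 𝒫` leaves
`K` immediately, then `cl(F_φ(x)) ⊆ T_{∂K ∩ C}(x) \ T_{∂K \ int C}(x)`. -/
theorem clInitialSpeeds_subset {n : ℕ} (F : Euc n → Set (Euc n)) (C K : Set (Euc n))
    (hSA : StandingAssumption F C) (hK : IsClosed K)
    (h1 : Assumption1 F K C) (h2 : Assumption2 F K C) (h3 : Assumption3 K C)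
    (D : Set ℝ) (φ : ℝ → Euc n) (hsol : IsSolution F C D φ)
    (x : Euc n) (hx0 : φ 0 = x) (hxP : x ∈ critSet K C)
    (hleave : LeavesImmediately K C D φ) :
    closure (initialSpeeds φ x) ⊆
      contingentCone (frontier K ∩ C) x \ contingentCone (frontier K \ interior C) x :=
  clInitialSpeeds_subset_general F C K hSA h1 h2 h3 D φ hsol x hx0 hxP hleave
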